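/- For every integer r ≥ 5, the matrix M = [[0, 1], [-1, 1-r]] is in SL(2, ℤ), lies in the ball of radius r (i.e., 0² + 1² + 1² + (1-r)² ≤ r²), and its eigenvector slope λ₁ = (1 - r + √((1-r)² - 4))/2 has continued fraction expansion with period [1, r-3], whose element sum is r - 2. -/

import Mathlib

/-! The slope `λ` is a root of `λ² + (r - 1)λ + 1 = 0`, so `u = λ + 1 = fract λ` satisfies
`u² = (r - 3)(1 - u)`. The continued fraction algorithm then sends `u` to `1/u = 1 + (1 - u)/u`
and on to `u/(1 - u) = (r - 3) + u`, whose fractional part is `u` again: from the second digit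
on, the digits alternate `1, r - 3`, and as `1 ≠ r - 3` there is no period of length one. -/

/-- The sequence of complete quotients of the continued fraction algorithm. -/
noncomputable def cq (x : ℝ) : ℕ → ℝ
  | 0 => x
  | n + 1 => (Int.fract (cq x n))⁻¹

/-- The `n`-th digit of the continued fraction expansion of `x`. -/
noncomputable def cfDigit (x : ℝ) (n : ℕ) : ℤ := ⌊cq x n⌋

/-- `b` is a period of the (eventually periodic) continued fraction of `x`. -/
def IsCFPeriod (x : ℝ) (b : List ℤ) : Prop :=
  b ≠ [] ∧ ∃ N : ℕ, ∀ i : ℕ, cfDigit x (N + i) = b.getD (i % b.length) 0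

/-- `b` is a minimal period of the continued fraction of `x`. -/
def IsMinCFPeriod (x : ℝ) (b : List ℤ) : Prop :=
  IsCFPeriod x b ∧ ∀ c : List ℤ, IsCFPeriod x c → b.length ≤ c.length

lemma cq_add (x : ℝ) (m n : ℕ) : cq x (m + n) = cq (cq x m) n := by
  induction n with
  | zero => rfl
  | succ n ih => rw [← add_assoc, cq, ih, cq]

section Periodic

variable {x : ℝ} {N p : ℕ}

lemma cq_add_mul_of_cq_add_eq (h : cq x (N + p) = cq x N) (k : ℕ) :
    cq x (N + p * k) = cq x N := by
  induction k with
  | zero => rfl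
  | succ k ih => rw [mul_add_one, ← add_assoc, cq_add, ih, ← cq_add, h]

lemma cq_add_eq_cq_add_mod (h : cq x (N + p) = cq x N) (i : ℕ) :
    cq x (N + i) = cq x (N + i % p) := by
  conv_lhs => rw [← Nat.div_add_mod i p, ← add_assoc, cq_add, cq_add_mul_of_cq_add_eq h,
    ← cq_add]

lemma isCFPeriod_ofFn_of_cq_add_eq (hp : 0 < p) (h : cq x (N + p) = cq x N) :
    IsCFPeriod x (List.ofFn fun j : Fin p => cfDigit x (N + j)) := by
  refine ⟨by simpa using hp.ne', N, fun i => ?_⟩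
  rw [List.length_ofFn, List.getD_eq_getElem?_getD, List.getElem?_ofFn,
    dif_pos (Nat.mod_lt i hp), Option.getD_some, cfDigit, cfDigit, cq_add_eq_cq_add_mod h]

end Periodic

lemma IsCFPeriod.isMinCFPeriod_pair {x : ℝ} {a b : ℤ} (h : IsCFPeriod x [a, b]) (hab : a ≠ b) :
    IsMinCFPeriod x [a, b] := by
  refine ⟨h, fun c ⟨hc, M, hM⟩ => ?_⟩
  by_contra! hlt
  have hc1 : c.length = 1 := by
    have := List.length_pos_iff.mpr hc
    simp only [List.length_cons, List.length_nil] at hlt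
    omega
  obtain ⟨-, N, hN⟩ := h
  have h0 := hN M
  have h1 := hN (M + 1)
  rw [add_comm N, hM, hc1, Nat.mod_one] at h0
  rw [← add_assoc, add_comm N, add_assoc, hM, hc1, Nat.mod_one, h0] at h1
  rcases Nat.mod_two_eq_zero_or_one M with hpar | hpar <;>
    simp [Nat.add_mod, hpar, hab, hab.symm] at h1

lemma cfDigit_cq_intCast_add_of_sq_eq {u : ℝ} {t : ℤ} (ht : 0 < t) (hu : 0 < u)
    (hsq : u ^ 2 = t * (1 - u)) (m : ℤ) :
    cfDigit (m + u) 1 = 1 ∧ cfDigit (m + u) 2 = t ∧ cq (m + u) (1 + 2) = cq (m + u) 1 := by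
  have ht1 : (1 : ℝ) ≤ t := by exact_mod_cast ht
  have hu1 : u < 1 := by nlinarith
  have hu_half : 1 / 2 < u := by nlinarith
  have hcq1 : cq (m + u) 1 = u⁻¹ := by
    rw [cq, cq, Int.fract_intCast_add, Int.fract_eq_self.mpr ⟨hu.le, hu1⟩]
  have hfloor1 : ⌊u⁻¹⌋ = 1 := by
    rw [Int.floor_eq_iff]
    constructor
    · push_cast; rw [le_inv_comm₀ one_pos hu]; simp [hu1.le]
    · push_cast; rw [inv_lt_comm₀ hu (by norm_num)]; linarith
  have hcq2 : cq (m + u) 2 = t + u := by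
    rw [cq, hcq1, ← Int.self_sub_floor, hfloor1, Int.cast_one]
    field_simp
    rw [div_eq_iff (sub_ne_zero.mpr hu1.ne')]
    linear_combination hsq
  have hfract2 : Int.fract (cq (m + u) 2) = u := by
    rw [hcq2, Int.fract_intCast_add, Int.fract_eq_self]; exact ⟨hu.le, hu1⟩
  refine ⟨by rw [cfDigit, hcq1, hfloor1], ?_, by rw [cq, hfract2, hcq1]⟩
  rw [cfDigit, hcq2, Int.floor_intCast_add, Int.floor_eq_zero_iff.mpr ⟨hu.le, hu1⟩, add_zero]

/-- The eigenvector slope of `[[0, 1], [-1, 1 - r]]`. -/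
noncomputable def eigenSlope (r : ℝ) : ℝ := (1 - r + √((1 - r) ^ 2 - 4)) / 2

section EigenSlope

variable {r : ℝ}

lemma eigenSlope_add_one_pos (hr : 3 < r) : 0 < eigenSlope r + 1 := by
  have hd : (r - 3) ^ 2 < (1 - r) ^ 2 - 4 := by nlinarith
  have := Real.lt_sqrt_of_sq_lt hd
  rw [eigenSlope]
  linarith

lemma eigenSlope_add_one_sq (hr : 3 ≤ r) :
    (eigenSlope r + 1) ^ 2 = (r - 3) * (1 - (eigenSlope r + 1)) := by
  have hd := Real.sq_sqrt (show 0 ≤ (1 - r) ^ 2 - 4 by nlinarith)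
  rw [eigenSlope]
  linear_combination hd / 4

end EigenSlope

/-- For every r ≥ 5, the matrix [[0,1],[-1,1-r]] is in SL(2,ℤ), lies in the ball
of radius r, and its eigenvector slope (1 - r + √((1-r)² - 4))/2 has continued
fraction period [1, r-3], with element sum r - 2. -/
theorem max_period_sum_matrix (r : ℤ) (hr : 5 ≤ r) :
    (Matrix.of ![![(0 : ℤ), 1], ![-1, 1 - r]]).det = 1 ∧
    (0 : ℤ) ^ 2 + 1 ^ 2 + (-1) ^ 2 + (1 - r) ^ 2 ≤ r ^ 2 ∧
    IsMinCFPeriod (((1 : ℝ) - r + Real.sqrt (((1 : ℝ) - r) ^ 2 - 4)) / 2)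
      [1, r - 3] ∧
    ([1, r - 3] : List ℤ).sum = r - 2 := by
  have hr3 : (3 : ℝ) < r := by exact_mod_cast (show 3 < r by omega)
  have hslope : eigenSlope r = ((-1 : ℤ) : ℝ) + (eigenSlope r + 1) := by push_cast; ring
  obtain ⟨hdigit1, hdigit2, hcq⟩ := cfDigit_cq_intCast_add_of_sq_eq (t := r - 3) (by omega)
    (eigenSlope_add_one_pos hr3) (by exact_mod_cast eigenSlope_add_one_sq hr3.le) (-1)
  rw [← hslope] at hdigit1 hdigit2 hcq
  have hperiod : IsCFPeriod (eigenSlope r) [1, r - 3] := by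
    simpa [List.ofFn_succ, hdigit1, hdigit2] using isCFPeriod_ofFn_of_cq_add_eq two_pos hcq
  refine ⟨by rw [Matrix.det_fin_two_of]; ring, by nlinarith,
    hperiod.isMinCFPeriod_pair (by omega), by simp; ring⟩
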